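/- For every scoring matrix γ: dist_γ(s,u) ≤ dist_γ(s,t) + dist_γ(t,u) for all s,t,u ∈ Σ* if and only if, for all a,b,c ∈ Σ: (i) γ(a,‐) ≤ γ(a,b) + γ(b,‐); (ii) γ(‐,a) ≤ γ(‐,b) + γ(b,a); (iii) min{γ(a,c), γ(a,‐)+γ(‐,c)} ≤ γ(a,b)+γ(b,c); and (iv) γ(b,‐) + γ(‐,b) ≥ 0. -/

import Mathlib

open List

/-- A scoring matrix on alphabet `σ`; `none` represents the space symbol `‐`.
The value at `(none, none)` is irrelevant (never used on admissible columns). -/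
abbrev Scoring (σ : Type*) := Option σ → Option σ → ℝ

/-- `A` is an alignment of the sequences `s` and `t`: a list of columns over
`Σ₋ × Σ₋` with no column `(‐,‐)`, whose first (resp. second) components with
spaces removed spell `s` (resp. `t`). -/
def IsAlignment {σ : Type*} (A : List (Option σ × Option σ)) (s t : List σ) : Prop :=
  (∀ c ∈ A, c ≠ ((none : Option σ), (none : Option σ))) ∧
  A.filterMap Prod.fst = s ∧ A.filterMap Prod.snd = t

/-- The score of an alignment: the sum of `γ` over its columns. -/
def alignScore {σ : Type*} (γ : Scoring σ) (A : List (Option σ × Option σ)) : ℝ :=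
  (A.map fun c => γ c.1 c.2).sum

/-- The weighted edit distance: minimum alignment score. -/
noncomputable def editDist {σ : Type*} (γ : Scoring σ) (s t : List σ) : ℝ :=
  sInf {x | ∃ A, IsAlignment A s t ∧ alignScore γ A = x}

/-- The normalized edit distance: minimum normalized alignment score
(score divided by number of columns); for `s = t = ε` it is `0`. -/
noncomputable def ndist {σ : Type*} (γ : Scoring σ) (s t : List σ) : ℝ :=
  sInf {x | ∃ A, IsAlignment A s t ∧ alignScore γ A / (A.length : ℝ) = x}

/-- A walk in the digraph `D(γ)`: a list of vertices of `Σ₋` in which the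
space `‐` never follows the space. -/
def IsWalkSeq {σ : Type*} (W : List (Option σ)) : Prop :=
  W.Chain' (fun a b => ¬(a = none ∧ b = none))

/-- The weight of a walk: the sum of the weights of its consecutive arcs. -/
def walkWeight {σ : Type*} (γ : Scoring σ) (W : List (Option σ)) : ℝ :=
  ((W.zip W.tail).map fun p => γ p.1 p.2).sum

/-- `D(γ)` has a cycle of negative total weight (cycles start and end at a
vertex of `Σ`). -/
def HasNegCycle {σ : Type*} (γ : Scoring σ) : Prop :=
  ∃ (a : σ) (W : List (Option σ)),
    IsWalkSeq (some a :: (W ++ [some a])) ∧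
    walkWeight γ (some a :: (W ++ [some a])) < 0

/-- The shortest-walk distance from `x` to `y` in `D(γ)`. -/
noncomputable def walkDist {σ : Type*} (γ : Scoring σ) (x y : Option σ) : ℝ :=
  sInf {w | ∃ W : List (Option σ), IsWalkSeq W ∧ W.head? = some x ∧
    W.getLast? = some y ∧ walkWeight γ W = w}

/-- A column of an extended alignment: a nonempty sequence over `Σ₋`, with at
least one non-space symbol, no two consecutive spaces, and not having a space
at both ends. -/
def IsExtCol {σ : Type*} (c : List (Option σ)) : Prop :=
  c ≠ [] ∧ (∃ x ∈ c, x ≠ none) ∧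
  c.Chain' (fun a b => ¬(a = none ∧ b = none)) ∧
  ¬(c.head? = some none ∧ c.getLast? = some none)

/-- An extended alignment of `s, t`: a list of admissible columns whose first
symbols (spaces removed) spell `s` and whose last symbols spell `t`. -/
def IsExtAlignment {σ : Type*} (E : List (List (Option σ))) (s t : List σ) : Prop :=
  (∀ c ∈ E, IsExtCol c) ∧
  E.filterMap (fun c => c.head?.bind id) = s ∧
  E.filterMap (fun c => c.getLast?.bind id) = t

/-- The extended edit distance: minimum total score over extended alignments,
where the score of a column is the sum of `γ` over its consecutive pairs. -/
noncomputable def edist {σ : Type*} (γ : Scoring σ) (s t : List σ) : ℝ :=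
  sInf {x | ∃ E, IsExtAlignment E s t ∧ (E.map (walkWeight γ)).sum = x}

/-- `f` is a premetric: `f x x = 0` and `f x y ≥ 0`. -/
def IsPremetric {σ : Type*} (f : List σ → List σ → ℝ) : Prop :=
  (∀ s, f s s = 0) ∧ (∀ s t, 0 ≤ f s t)

/-!
Given alignments `A` of `s, t` and `B` of `t, u`, run through them in parallel along `t`. Spaces
of `t` are copied, and a letter `b` of `t`, aligned as `(x, b)` in `A` and `(b, z)` in `B`
(`x, z ∈ Σ₋`), is replaced by an optimal alignment of `x` with `z`. This produces an alignment of
`s, u` of score at most the sum of the scores of `A` and `B` as soon as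
`dist(x, z) ≤ γ(x, b) + γ(b, z)` for all such `x, b, z`, which is itself an instance of the triangle
inequality. Computing `dist` between words of length at most one, this condition splits into
(i)–(iv) according to whether `x` and `z` are letters or spaces.
-/
lemma List.filterMap_cons_eq_toList_append {α β : Type*} (f : α → Option β) (a : α)
    (l : List α) : (a :: l).filterMap f = (f a).toList ++ l.filterMap f := by
  cases h : f a <;> simp [h]

namespace IsAlignment

variable {σ : Type*}

lemma nil_iff {s t : List σ} : IsAlignment [] s t ↔ s = [] ∧ t = [] := by
  simp [IsAlignment, eq_comm]

lemma cons_iff {c : Option σ × Option σ} {A : List (Option σ × Option σ)} {s t : List σ} :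
    IsAlignment (c :: A) s t ↔
      c ≠ (none, none) ∧ ∃ s' t', IsAlignment A s' t' ∧
        s = c.1.toList ++ s' ∧ t = c.2.toList ++ t' := by
  simp only [IsAlignment, List.mem_cons, forall_eq_or_imp, List.filterMap_cons_eq_toList_append]
  constructor
  · rintro ⟨⟨hc, hA⟩, rfl, rfl⟩
    exact ⟨hc, _, _, ⟨hA, rfl, rfl⟩, rfl, rfl⟩
  · rintro ⟨hc, s', t', ⟨hA, rfl, rfl⟩, rfl, rfl⟩
    exact ⟨⟨hc, hA⟩, rfl, rfl⟩

lemma cons {c : Option σ × Option σ} {A : List (Option σ × Option σ)} {s t : List σ}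
    (hc : c ≠ (none, none)) (hA : IsAlignment A s t) :
    IsAlignment (c :: A) (c.1.toList ++ s) (c.2.toList ++ t) :=
  cons_iff.2 ⟨hc, s, t, hA, rfl, rfl⟩

lemma singleton {c : Option σ × Option σ} (hc : c ≠ (none, none)) :
    IsAlignment [c] c.1.toList c.2.toList := by
  simpa using cons hc (nil_iff.2 ⟨rfl, rfl⟩)

lemma append {A B : List (Option σ × Option σ)} {s t s' t' : List σ}
    (hA : IsAlignment A s t) (hB : IsAlignment B s' t') :
    IsAlignment (A ++ B) (s ++ s') (t ++ t') := by
  obtain ⟨hA0, rfl, rfl⟩ := hA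
  obtain ⟨hB0, rfl, rfl⟩ := hB
  exact ⟨fun c hc => (List.mem_append.1 hc).elim (hA0 c) (hB0 c),
    List.filterMap_append, List.filterMap_append⟩

lemma length_le {A : List (Option σ × Option σ)} {s t : List σ} (h : IsAlignment A s t) :
    A.length ≤ s.length + t.length := by
  induction A generalizing s t with
  | nil => simp
  | cons c A ih =>
    obtain ⟨hc, s', t', hA, rfl, rfl⟩ := cons_iff.1 h
    have := ih hA
    rcases c with ⟨_ | _, _ | _⟩ <;> simp at hc ⊢ <;> omega

lemma fst_mem {A : List (Option σ × Option σ)} {s t : List σ} (h : IsAlignment A s t)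
    {c : Option σ × Option σ} (hc : c ∈ A) : c.1 ∈ none :: s.map some := by
  obtain ⟨-, rfl, -⟩ := h
  rcases hc' : c.1 with _ | a
  · simp
  · exact List.mem_cons_of_mem _ (List.mem_map_of_mem (List.mem_filterMap.2 ⟨c, hc, hc'⟩))

lemma snd_mem {A : List (Option σ × Option σ)} {s t : List σ} (h : IsAlignment A s t)
    {c : Option σ × Option σ} (hc : c ∈ A) : c.2 ∈ none :: t.map some := by
  obtain ⟨-, -, rfl⟩ := h
  rcases hc' : c.2 with _ | a
  · simp
  · exact List.mem_cons_of_mem _ (List.mem_map_of_mem (List.mem_filterMap.2 ⟨c, hc, hc'⟩))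

end IsAlignment

lemma exists_isAlignment {σ : Type*} (s t : List σ) : ∃ A, IsAlignment A s t := by
  induction s with
  | cons a s ih =>
    obtain ⟨A, hA⟩ := ih
    exact ⟨_, IsAlignment.cons (c := (some a, none)) (by simp) hA⟩
  | nil =>
    induction t with
    | nil => exact ⟨[], IsAlignment.nil_iff.2 ⟨rfl, rfl⟩⟩
    | cons b t ih =>
      obtain ⟨A, hA⟩ := ih
      exact ⟨_, IsAlignment.cons (c := (none, some b)) (by simp) hA⟩

section EditDistance

variable {σ : Type*} (γ : Scoring σ)

@[simp]
lemma alignScore_nil : alignScore γ [] = 0 := rfl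

@[simp]
lemma alignScore_cons (c : Option σ × Option σ) (A : List (Option σ × Option σ)) :
    alignScore γ (c :: A) = γ c.1 c.2 + alignScore γ A := by
  simp [alignScore]

@[simp]
lemma alignScore_append (A B : List (Option σ × Option σ)) :
    alignScore γ (A ++ B) = alignScore γ A + alignScore γ B := by
  simp [alignScore]

lemma alignScores_nonempty (s t : List σ) :
    {x | ∃ A, IsAlignment A s t ∧ alignScore γ A = x}.Nonempty := by
  obtain ⟨A, hA⟩ := exists_isAlignment s t
  exact ⟨_, A, hA, rfl⟩

/-- Only the finitely many columns over the letters of `s` and `t` can occur, and there are at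
most `|s| + |t|` of them. -/
lemma alignScores_bddBelow (s t : List σ) :
    BddBelow {x | ∃ A, IsAlignment A s t ∧ alignScore γ A = x} := by
  have hfin : ((fun c : Option σ × Option σ => γ c.1 c.2) ''
      {x | x ∈ none :: s.map some} ×ˢ {y | y ∈ none :: t.map some}).Finite :=
    ((List.finite_toSet _).prod (List.finite_toSet _)).image _
  obtain ⟨m, hm⟩ := hfin.bddBelow
  refine ⟨(s.length + t.length) * min m 0, ?_⟩
  rintro _ ⟨A, hA, rfl⟩
  have hcol : ∀ x ∈ A.map (fun c => γ c.1 c.2), min m 0 ≤ x := by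
    simp only [List.mem_map]
    rintro _ ⟨c, hc, rfl⟩
    exact (min_le_left _ _).trans (hm ⟨c, ⟨hA.fst_mem hc, hA.snd_mem hc⟩, rfl⟩)
  calc (s.length + t.length) * min m 0 ≤ A.length * min m 0 := by
        exact mul_le_mul_of_nonpos_right (by exact_mod_cast hA.length_le) (min_le_right _ _)
    _ ≤ alignScore γ A := by
        simpa [alignScore] using List.card_nsmul_le_sum _ _ hcol

lemma editDist_le_alignScore {A : List (Option σ × Option σ)} {s t : List σ}
    (h : IsAlignment A s t) : editDist γ s t ≤ alignScore γ A :=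
  csInf_le (alignScores_bddBelow γ s t) ⟨A, h, rfl⟩

lemma le_editDist {s t : List σ} {x : ℝ} (h : ∀ A, IsAlignment A s t → x ≤ alignScore γ A) :
    x ≤ editDist γ s t :=
  le_csInf (alignScores_nonempty γ s t) (by rintro _ ⟨A, hA, rfl⟩; exact h A hA)

end EditDistance

section Singletons

variable {σ : Type*} {A : List (Option σ × Option σ)}

lemma IsAlignment.eq_nil_of_nil_nil (h : IsAlignment A [] []) : A = [] := by
  cases A with
  | nil => rfl
  | cons c A =>
    obtain ⟨hc, s', t', -, hs, ht⟩ := IsAlignment.cons_iff.1 h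
    rcases c with ⟨_ | _, _ | _⟩ <;> simp at hc hs ht

lemma IsAlignment.eq_of_singleton_nil {a : σ} (h : IsAlignment A [a] []) :
    A = [(some a, none)] := by
  cases A with
  | nil => simp [IsAlignment.nil_iff] at h
  | cons c A =>
    obtain ⟨hc, s', t', hA, hs, ht⟩ := IsAlignment.cons_iff.1 h
    rcases c with ⟨_ | _, _ | _⟩ <;> simp at hc hs ht
    obtain ⟨rfl, rfl⟩ := hs
    subst ht
    simp [hA.eq_nil_of_nil_nil]

lemma IsAlignment.eq_of_nil_singleton {a : σ} (h : IsAlignment A [] [a]) :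
    A = [(none, some a)] := by
  cases A with
  | nil => simp [IsAlignment.nil_iff] at h
  | cons c A =>
    obtain ⟨hc, s', t', hA, hs, ht⟩ := IsAlignment.cons_iff.1 h
    rcases c with ⟨_ | _, _ | _⟩ <;> simp at hc hs ht
    obtain ⟨rfl, rfl⟩ := ht
    subst hs
    simp [hA.eq_nil_of_nil_nil]

lemma IsAlignment.eq_of_singleton_singleton {a c : σ} (h : IsAlignment A [a] [c]) :
    A = [(some a, some c)] ∨ A = [(some a, none), (none, some c)] ∨
      A = [(none, some c), (some a, none)] := by
  cases A with
  | nil => simp [IsAlignment.nil_iff] at h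
  | cons d A =>
    obtain ⟨hd, s', t', hA, hs, ht⟩ := IsAlignment.cons_iff.1 h
    rcases d with ⟨_ | _, _ | _⟩ <;> simp at hd hs ht
    · obtain ⟨rfl, rfl⟩ := ht
      subst hs
      simp [hA.eq_of_singleton_nil]
    · obtain ⟨rfl, rfl⟩ := hs
      subst ht
      simp [hA.eq_of_nil_singleton]
    · obtain ⟨rfl, rfl⟩ := hs
      obtain ⟨rfl, rfl⟩ := ht
      simp [hA.eq_nil_of_nil_nil]

end Singletons

section SmallDistances

variable {σ : Type*} (γ : Scoring σ)

lemma editDist_nil_nil : editDist γ [] [] = 0 :=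
  le_antisymm (editDist_le_alignScore γ (IsAlignment.nil_iff.2 ⟨rfl, rfl⟩))
    (le_editDist γ fun _ hA => by simp [hA.eq_nil_of_nil_nil])

lemma editDist_singleton_nil (a : σ) : editDist γ [a] [] = γ (some a) none :=
  le_antisymm
    (by simpa using
      editDist_le_alignScore γ (IsAlignment.singleton (c := (some a, none)) (by simp)))
    (le_editDist γ fun _ hA => by simp [hA.eq_of_singleton_nil])

lemma editDist_nil_singleton (a : σ) : editDist γ [] [a] = γ none (some a) :=
  le_antisymm
    (by simpa using
      editDist_le_alignScore γ (IsAlignment.singleton (c := (none, some a)) (by simp)))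
    (le_editDist γ fun _ hA => by simp [hA.eq_of_nil_singleton])

lemma editDist_singleton_singleton (a c : σ) :
    editDist γ [a] [c] = min (γ (some a) (some c)) (γ (some a) none + γ none (some c)) := by
  refine le_antisymm (le_min ?_ ?_) (le_editDist γ fun A hA => ?_)
  · simpa using editDist_le_alignScore γ (IsAlignment.singleton (c := (some a, some c)) (by simp))
  · simpa using editDist_le_alignScore γ
      ((IsAlignment.singleton (c := (some a, none)) (by simp)).append
        (IsAlignment.singleton (c := (none, some c)) (by simp)))
  · rcases hA.eq_of_singleton_singleton with rfl | rfl | rfl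
    · simp
    · simp
    · simp [add_comm]

end SmallDistances

section Triangle

variable {σ : Type*} (γ : Scoring σ)

lemma editDist_toList_le {c : Option σ × Option σ} (hc : c ≠ (none, none)) :
    editDist γ c.1.toList c.2.toList ≤ γ c.1 c.2 := by
  simpa using editDist_le_alignScore γ (IsAlignment.singleton hc)

lemma le_editDist_add_editDist {s t s' t' : List σ} {d : ℝ}
    (h : ∀ A B, IsAlignment A s t → IsAlignment B s' t' → d ≤ alignScore γ A + alignScore γ B) :
    d ≤ editDist γ s t + editDist γ s' t' := by
  have : d - editDist γ s' t' ≤ editDist γ s t :=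
    le_editDist γ fun A hA => sub_le_comm.1 <| le_editDist γ fun B hB =>
      sub_le_iff_le_add'.2 (h A B hA hB)
  linarith

lemma editDist_append_le (s t s' t' : List σ) :
    editDist γ (s ++ s') (t ++ t') ≤ editDist γ s t + editDist γ s' t' :=
  le_editDist_add_editDist γ fun A B hA hB =>
    (editDist_le_alignScore γ (hA.append hB)).trans_eq (alignScore_append γ A B)

lemma editDist_cons_le {c : Option σ × Option σ} (hc : c ≠ (none, none)) (s t : List σ) :
    editDist γ (c.1.toList ++ s) (c.2.toList ++ t) ≤ γ c.1 c.2 + editDist γ s t :=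
  (editDist_append_le γ _ _ _ _).trans (add_le_add_left (editDist_toList_le γ hc) _)

def ColumnTriangle : Prop :=
  ∀ (x z : Option σ) (b : σ), editDist γ x.toList z.toList ≤ γ x (some b) + γ (some b) z

variable {γ}

lemma ColumnTriangle.of_triangle
    (h : ∀ s t u : List σ, editDist γ s u ≤ editDist γ s t + editDist γ t u) :
    ColumnTriangle γ := fun x z b =>
  (h _ [b] _).trans <| add_le_add
    (editDist_toList_le γ (c := (x, some b)) (by simp))
    (editDist_toList_le γ (c := (some b, z)) (by simp))

lemma ColumnTriangle.editDist_le_alignScore_add (hγ : ColumnTriangle γ)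
    {A B : List (Option σ × Option σ)} {s t u : List σ}
    (hA : IsAlignment A s t) (hB : IsAlignment B t u) :
    editDist γ s u ≤ alignScore γ A + alignScore γ B := by
  induction A generalizing s t u B with
  | nil =>
    obtain ⟨rfl, rfl⟩ := IsAlignment.nil_iff.1 hA
    simpa using editDist_le_alignScore γ hB
  | cons c A ih =>
    obtain ⟨hc, s', t', hA', rfl, rfl⟩ := IsAlignment.cons_iff.1 hA
    obtain ⟨x, _ | b⟩ := c
    · have hrest := ih hA' hB
      have hcol := editDist_cons_le γ hc s' u
      simp only [Option.toList_none, List.nil_append, alignScore_cons] at hcol ⊢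
      linarith
    induction B generalizing u with
    | nil => simp [IsAlignment.nil_iff] at hB
    | cons d B ihB =>
      obtain ⟨hd, t'', u', hB', ht, rfl⟩ := IsAlignment.cons_iff.1 hB
      obtain ⟨_ | b', z⟩ := d
      · obtain rfl : b :: t' = t'' := by simpa using ht
        have hrest := ihB hB'
        have hcol := editDist_cons_le γ hd (x.toList ++ s') u'
        simp only [Option.toList_none, List.nil_append, alignScore_cons] at hrest hcol ⊢
        linarith
      · obtain ⟨rfl, rfl⟩ : b = b' ∧ t' = t'' := by simpa using ht
        have hrest := ih hA' hB'
        have hsplit := editDist_append_le γ x.toList z.toList s' u'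
        have hcol := hγ x z b
        simp only [alignScore_cons]
        linarith

lemma ColumnTriangle.triangle (hγ : ColumnTriangle γ) (s t u : List σ) :
    editDist γ s u ≤ editDist γ s t + editDist γ t u :=
  le_editDist_add_editDist γ fun _ _ hA hB => hγ.editDist_le_alignScore_add hA hB

lemma columnTriangle_iff : ColumnTriangle γ ↔
    ((∀ a b : σ, γ (some a) none ≤ γ (some a) (some b) + γ (some b) none) ∧
     (∀ a b : σ, γ none (some a) ≤ γ none (some b) + γ (some b) (some a)) ∧
     (∀ a b c : σ,
       min (γ (some a) (some c)) (γ (some a) none + γ none (some c)) ≤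
         γ (some a) (some b) + γ (some b) (some c)) ∧
     (∀ b : σ, 0 ≤ γ (some b) none + γ none (some b))) := by
  constructor
  · intro h
    refine ⟨fun a b => ?_, fun a b => ?_, fun a b c => ?_, fun b => ?_⟩
    · simpa [editDist_singleton_nil] using h (some a) none b
    · simpa [editDist_nil_singleton] using h none (some a) b
    · simpa [editDist_singleton_singleton] using h (some a) (some c) b
    · simpa [editDist_nil_nil, add_comm] using h none none b
  · rintro ⟨hdel, hins, hsub, hindel⟩ (_ | a) (_ | c) b
    · simpa [editDist_nil_nil, add_comm] using hindel b
    · simpa [editDist_nil_singleton] using hins c b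
    · simpa [editDist_singleton_nil] using hdel a b
    · simpa [editDist_singleton_singleton] using hsub a b c

end Triangle

theorem stmt6_general {σ : Type*} (γ : Scoring σ) :
    (∀ s t u : List σ, editDist γ s u ≤ editDist γ s t + editDist γ t u) ↔
      ((∀ a b : σ, γ (some a) none ≤ γ (some a) (some b) + γ (some b) none) ∧
       (∀ a b : σ, γ none (some a) ≤ γ none (some b) + γ (some b) (some a)) ∧
       (∀ a b c : σ,
         min (γ (some a) (some c)) (γ (some a) none + γ none (some c)) ≤
           γ (some a) (some b) + γ (some b) (some c)) ∧
       (∀ b : σ, 0 ≤ γ (some b) none + γ none (some b))) :=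
  (Iff.intro ColumnTriangle.of_triangle ColumnTriangle.triangle).trans columnTriangle_iff

theorem stmt6 {σ : Type*} [Fintype σ] (γ : Scoring σ) :
    (∀ s t u : List σ, editDist γ s u ≤ editDist γ s t + editDist γ t u) ↔
      ((∀ a b : σ, γ (some a) none ≤ γ (some a) (some b) + γ (some b) none) ∧
       (∀ a b : σ, γ none (some a) ≤ γ none (some b) + γ (some b) (some a)) ∧
       (∀ a b c : σ,
         min (γ (some a) (some c)) (γ (some a) none + γ none (some c)) ≤
           γ (some a) (some b) + γ (some b) (some c)) ∧
       (∀ b : σ, 0 ≤ γ (some b) none + γ none (some b))) :=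
  stmt6_general γ
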